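/- The function g(x) = x·e^{−x²} − 2√π·(Φ(2x√2) − Φ(x√2)), where Φ is the standard normal CDF, has a unique positive root λ, and λ ≈ 0.789004 (in particular λ ∈ (0.78, 0.80)). -/

import Mathlib

open Real

/-- The cumulative distribution function of the standard normal distribution. -/
noncomputable def stdNormalCDF (s : ℝ) : ℝ :=
  (1 / Real.sqrt (2 * π)) * ∫ x in Set.Iic s, Real.exp (-x ^ 2 / 2)

/-- g(x) = x·e^{−x²} − 2√π·(Φ(2x√2) − Φ(x√2)). -/
noncomputable def thresholdFun (x : ℝ) : ℝ :=
  x * Real.exp (-x ^ 2) -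
    2 * Real.sqrt π *
      (stdNormalCDF (2 * x * Real.sqrt 2) - stdNormalCDF (x * Real.sqrt 2))

/-!
Substituting `t = u √2` gives `g x = x e^{-x²} - 2 ∫_x^{2x} e^{-u²} du`, hence
`g' x = e^{-x²} ψ x` with `ψ x = 3 - 2x² - 4e^{-3x²}`. Since `ψ' x = 4x (6e^{-3x²} - 1)`, `ψ`
increases on `[0, 0.77]` from `ψ 0 = -1` to a positive value, and it stays positive up to `1`;
so `g` decreases from `g 0 = 0` and then increases on `[0, 1]`. For `x ≥ 1`, comparing
`e^{-u²}` with `u e^{-u²} / x` shows `g x > 0`. Therefore every positive zero lies where `g` is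
strictly increasing, and the bracket `g 0.78 < 0 < g 0.80` pins down exactly one. The bracket is
certified by integrating `e^{-m²} (1 + t) ≤ e^{-u²} ≤ e^{-m²} (1 + t + t²)`, `t = m² - u²`,
over four subintervals with midpoints `m`.
-/

open intervalIntegral Set Finset
open scoped Nat

lemma exp_neg_le_inv_sum_range {x : ℝ} (hx : 0 ≤ x) (n : ℕ) :
    exp (-x) ≤ (∑ i ∈ range (n + 1), x ^ i / i !)⁻¹ := by
  have hsum : 0 < ∑ i ∈ range (n + 1), x ^ i / i ! := by
    rw [sum_range_succ']
    exact add_pos_of_nonneg_of_pos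
      (sum_nonneg fun i _ => div_nonneg (pow_nonneg hx _) (by positivity)) (by simp)
  rw [exp_neg]
  exact inv_anti₀ hsum (sum_le_exp_of_nonneg hx _)

/-- Taylor's remainder bound `Real.exp_bound'` needs `x ≤ 1`, hence the splitting
`exp x = exp (x / k) ^ k`. -/
lemma inv_pow_le_exp_neg {x : ℝ} {k n : ℕ} (hx : 0 ≤ x) (hk : 0 < k) (hxk : x ≤ k)
    (hn : 0 < n) :
    ((∑ i ∈ range n, (x / k) ^ i / i ! + (x / k) ^ n * (n + 1) / (n ! * n)) ^ k)⁻¹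
      ≤ exp (-x) := by
  have hk' : (0 : ℝ) < k := Nat.cast_pos.2 hk
  have hxk' : 0 ≤ x / k := div_nonneg hx hk'.le
  have hexp : exp x = exp (x / k) ^ k := by
    rw [← exp_nat_mul, mul_div_cancel₀ _ hk'.ne']
  rw [exp_neg, hexp]
  exact inv_anti₀ (by positivity) <| pow_le_pow_left₀ (exp_pos _).le
    (exp_bound' hxk' ((div_le_one hk').2 hxk) hn) k

lemma integrableOn_exp_neg_sq_div_two (s : ℝ) :
    MeasureTheory.IntegrableOn (fun t : ℝ => exp (-t ^ 2 / 2)) (Iic s) := by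
  have h := (integrable_exp_neg_mul_sq (b := 1 / 2) (by norm_num)).integrableOn (s := Iic s)
  convert h using 3
  ring

lemma stdNormalCDF_sub (a b : ℝ) :
    stdNormalCDF b - stdNormalCDF a = (1 / √(2 * π)) * ∫ t in a..b, exp (-t ^ 2 / 2) := by
  rw [stdNormalCDF, stdNormalCDF, ← mul_sub, integral_Iic_sub_Iic
    (integrableOn_exp_neg_sq_div_two a) (integrableOn_exp_neg_sq_div_two b)]

lemma thresholdFun_eq_integral (x : ℝ) :
    thresholdFun x = x * exp (-x ^ 2) - 2 * ∫ u in x..2 * x, exp (-u ^ 2) := by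
  have h2 : √2 ≠ 0 := by positivity
  have hsubst : ∫ t in x * √2..2 * x * √2, exp (-t ^ 2 / 2)
      = √2 * ∫ u in x..2 * x, exp (-u ^ 2) := by
    have hscale : (fun u : ℝ => exp (-(u * √2) ^ 2 / 2)) = fun u => exp (-u ^ 2) := by
      ext u
      rw [mul_pow, sq_sqrt zero_le_two]
      ring_nf
    have h := integral_comp_mul_right (a := x) (b := 2 * x) (fun t => exp (-t ^ 2 / 2)) h2
    beta_reduce at h
    rw [hscale, smul_eq_mul] at h
    rw [h, mul_inv_cancel_left₀ h2]
  rw [thresholdFun, stdNormalCDF_sub, hsubst, sqrt_mul zero_le_two]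
  field_simp

lemma continuous_exp_neg_sq : Continuous fun u : ℝ => exp (-u ^ 2) := by fun_prop

noncomputable def thresholdFunDerivFactor (x : ℝ) : ℝ := 3 - 2 * x ^ 2 - 4 * exp (-(3 * x ^ 2))

lemma hasDerivAt_thresholdFun (x : ℝ) :
    HasDerivAt thresholdFun (exp (-x ^ 2) * thresholdFunDerivFactor x) x := by
  have hI : HasDerivAt (fun y => ∫ u in y..2 * y, exp (-u ^ 2))
      (exp (-(2 * x) ^ 2) * 2 - exp (-x ^ 2)) x := by
    have hF := continuous_exp_neg_sq.integral_hasStrictDerivAt 0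
    have h := (((hF (2 * x)).hasDerivAt.comp x ((hasDerivAt_id x).const_mul 2)).sub
      (hF x).hasDerivAt)
    refine (h.congr_deriv (by simp)).congr_of_eventuallyEq (.of_forall fun y => ?_)
    exact (integral_interval_sub_left (continuous_exp_neg_sq.intervalIntegrable _ _)
      (continuous_exp_neg_sq.intervalIntegrable _ _)).symm
  have hfirst : HasDerivAt (fun y => y * exp (-y ^ 2))
      (exp (-x ^ 2) + x * (exp (-x ^ 2) * -(2 * x))) x := by
    simpa using (hasDerivAt_id' x).fun_mul (hasDerivAt_pow 2 x).fun_neg.exp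
  have hsplit : exp (-(2 * x) ^ 2) = exp (-x ^ 2) * exp (-(3 * x ^ 2)) := by
    rw [← exp_add]; ring_nf
  refine ((hfirst.sub (hI.const_mul 2)).congr_deriv ?_).congr_of_eventuallyEq
    (.of_forall thresholdFun_eq_integral)
  rw [thresholdFunDerivFactor, hsplit]
  ring

lemma continuous_thresholdFun : Continuous thresholdFun :=
  continuous_iff_continuousAt.2 fun x => (hasDerivAt_thresholdFun x).continuousAt

lemma hasDerivAt_thresholdFunDerivFactor (x : ℝ) :
    HasDerivAt thresholdFunDerivFactor (4 * x * (6 * exp (-(3 * x ^ 2)) - 1)) x := by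
  have h := ((hasDerivAt_pow 2 x).const_mul 2).const_sub 3 |>.sub
    ((((hasDerivAt_pow 2 x).const_mul 3).fun_neg.exp).const_mul 4)
  exact h.congr_deriv (by push_cast; ring)

lemma continuous_thresholdFunDerivFactor : Continuous thresholdFunDerivFactor :=
  continuous_iff_continuousAt.2 fun x => (hasDerivAt_thresholdFunDerivFactor x).continuousAt

lemma strictMonoOn_thresholdFunDerivFactor :
    StrictMonoOn thresholdFunDerivFactor (Icc 0 0.77) := by
  refine strictMonoOn_of_deriv_pos (convex_Icc _ _)
    continuous_thresholdFunDerivFactor.continuousOn fun x hx => ?_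
  rw [interior_Icc] at hx
  rw [(hasDerivAt_thresholdFunDerivFactor x).deriv]
  have hexp : (1 / 6 : ℝ) < exp (-(3 * x ^ 2)) := calc
    (1 / 6 : ℝ) < exp (-(3 * 0.77 ^ 2)) :=
      lt_of_lt_of_le (by norm_num [sum_range_succ, Nat.factorial])
        (inv_pow_le_exp_neg (k := 2) (n := 8) (by norm_num) (by norm_num) (by norm_num)
          (by norm_num))
    _ ≤ exp (-(3 * x ^ 2)) := exp_le_exp.2 (by nlinarith [hx.1, hx.2])
  exact mul_pos (by linarith [hx.1]) (by linarith)

lemma thresholdFunDerivFactor_pos {x : ℝ} (hx : 0.77 ≤ x) (hx1 : x ≤ 1) :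
    0 < thresholdFunDerivFactor x := by
  have hexp : exp (-(3 * x ^ 2)) < 1 / 4 := calc
    exp (-(3 * x ^ 2)) ≤ exp (-(3 * 0.77 ^ 2)) := exp_le_exp.2 (by nlinarith)
    _ ≤ _ := exp_neg_le_inv_sum_range (by norm_num) 2
    _ < 1 / 4 := by norm_num [sum_range_succ, Nat.factorial]
  rw [thresholdFunDerivFactor]
  nlinarith

lemma exists_thresholdFunDerivFactor_sign_change : ∃ a ∈ Ioo (0 : ℝ) 0.77,
    (∀ x ∈ Ico 0 a, thresholdFunDerivFactor x < 0) ∧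
      ∀ x ∈ Ioc a 1, 0 < thresholdFunDerivFactor x := by
  have h0 : thresholdFunDerivFactor 0 < 0 := by norm_num [thresholdFunDerivFactor]
  have h77 := thresholdFunDerivFactor_pos le_rfl (by norm_num)
  obtain ⟨a, ha, hψa⟩ := intermediate_value_Ioo (by norm_num)
    continuous_thresholdFunDerivFactor.continuousOn ⟨h0, h77⟩
  have hmono := strictMonoOn_thresholdFunDerivFactor
  refine ⟨a, ha, fun x hx => ?_, fun x hx => ?_⟩
  · rw [← hψa]
    exact hmono ⟨hx.1, by linarith [hx.2, ha.2]⟩ ⟨ha.1.le, ha.2.le⟩ hx.2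
  · rcases le_or_gt x 0.77 with hx77 | hx77
    · rw [← hψa]
      exact hmono ⟨ha.1.le, ha.2.le⟩ ⟨by linarith [hx.1, ha.1], hx77⟩ hx.1
    · exact thresholdFunDerivFactor_pos hx77.le hx.2

lemma exists_strictAntiOn_strictMonoOn_thresholdFun : ∃ a ∈ Ioo (0 : ℝ) 0.77,
    StrictAntiOn thresholdFun (Icc 0 a) ∧ StrictMonoOn thresholdFun (Icc a 1) := by
  obtain ⟨a, ha, hneg, hpos⟩ := exists_thresholdFunDerivFactor_sign_change
  refine ⟨a, ha, strictAntiOn_of_deriv_neg (convex_Icc _ _)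
    continuous_thresholdFun.continuousOn fun x hx => ?_, strictMonoOn_of_deriv_pos
    (convex_Icc _ _) continuous_thresholdFun.continuousOn fun x hx => ?_⟩
  all_goals rw [interior_Icc] at hx; rw [(hasDerivAt_thresholdFun x).deriv]
  · exact mul_neg_of_pos_of_neg (exp_pos _) (hneg x (Ioo_subset_Ico_self hx))
  · exact mul_pos (exp_pos _) (hpos x (Ioo_subset_Ioc_self hx))

lemma integral_exp_neg_sq_le {a b : ℝ} (ha : 0 < a) (hab : a ≤ b) :
    ∫ u in a..b, exp (-u ^ 2) ≤ (exp (-a ^ 2) - exp (-b ^ 2)) / (2 * a) := by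
  have hderiv : ∀ u ∈ uIcc a b,
      HasDerivAt (fun v => -exp (-v ^ 2) / (2 * a)) (u * exp (-u ^ 2) / a) u := fun u _ => by
    refine ((hasDerivAt_pow 2 u).fun_neg.exp.fun_neg.div_const (2 * a)).congr_deriv ?_
    field_simp
    ring
  calc ∫ u in a..b, exp (-u ^ 2)
      ≤ ∫ u in a..b, u * exp (-u ^ 2) / a := by
        refine integral_mono_on hab (continuous_exp_neg_sq.intervalIntegrable _ _)
          ((by fun_prop : Continuous fun u => u * exp (-u ^ 2) / a).intervalIntegrable _ _)
          fun u hu => ?_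
        rw [le_div_iff₀ ha, mul_comm]
        exact mul_le_mul_of_nonneg_right hu.1 (exp_pos _).le
    _ = (exp (-a ^ 2) - exp (-b ^ 2)) / (2 * a) := by
        rw [integral_eq_sub_of_hasDerivAt hderiv
          ((by fun_prop : Continuous fun u => u * exp (-u ^ 2) / a).intervalIntegrable _ _)]
        ring

lemma thresholdFun_pos_of_one_le {x : ℝ} (hx : 1 ≤ x) : 0 < thresholdFun x := by
  have hx0 : 0 < x := one_pos.trans_le hx
  have hI := integral_exp_neg_sq_le hx0 (by linarith : x ≤ 2 * x)
  have hdiv : (exp (-x ^ 2) - exp (-(2 * x) ^ 2)) / (2 * x) < x * exp (-x ^ 2) / 2 := by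
    rw [div_lt_iff₀ (by positivity)]
    nlinarith [mul_le_mul_of_nonneg_right (by nlinarith : 1 ≤ x ^ 2) (exp_pos (-x ^ 2)).le,
      exp_pos (-(2 * x) ^ 2)]
  rw [thresholdFun_eq_integral]
  linarith

lemma exp_neg_sq_eq_mul (u m : ℝ) : exp (-u ^ 2) = exp (-m ^ 2) * exp (m ^ 2 - u ^ 2) := by
  rw [← exp_add]
  ring_nf

lemma mul_le_integral_exp_neg_sq {a b m L : ℝ} (hab : a ≤ b) (hL : L ≤ exp (-m ^ 2))
    (hP : 0 ≤ (1 + m ^ 2) * (b - a) - (b ^ 3 - a ^ 3) / 3) :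
    L * ((1 + m ^ 2) * (b - a) - (b ^ 3 - a ^ 3) / 3) ≤ ∫ u in a..b, exp (-u ^ 2) := by
  have hpoly :
      ∫ u in a..b, (1 + m ^ 2 - u ^ 2) = (1 + m ^ 2) * (b - a) - (b ^ 3 - a ^ 3) / 3 := by
    simp [integral_pow]
    ring
  calc L * ((1 + m ^ 2) * (b - a) - (b ^ 3 - a ^ 3) / 3)
      ≤ exp (-m ^ 2) * ∫ u in a..b, (1 + m ^ 2 - u ^ 2) := by
        rw [hpoly]
        exact mul_le_mul_of_nonneg_right hL hP
    _ = ∫ u in a..b, exp (-m ^ 2) * (1 + m ^ 2 - u ^ 2) := (integral_const_mul _ _).symm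
    _ ≤ ∫ u in a..b, exp (-u ^ 2) := by
        refine integral_mono_on hab (Continuous.intervalIntegrable (by fun_prop) _ _)
          (continuous_exp_neg_sq.intervalIntegrable _ _) fun u _ => ?_
        rw [exp_neg_sq_eq_mul u m]
        exact mul_le_mul_of_nonneg_left (by linarith [add_one_le_exp (m ^ 2 - u ^ 2)])
          (exp_pos _).le

lemma integral_exp_neg_sq_le_mul {a b m U : ℝ} (ha : 0 ≤ a) (hab : a ≤ b)
    (hma : m ^ 2 - a ^ 2 ≤ 1) (hmb : b ^ 2 - m ^ 2 ≤ 1) (hU : exp (-m ^ 2) ≤ U)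
    (hQ : 0 ≤ (1 + m ^ 2 + m ^ 4) * (b - a) - (1 + 2 * m ^ 2) * (b ^ 3 - a ^ 3) / 3
      + (b ^ 5 - a ^ 5) / 5) :
    ∫ u in a..b, exp (-u ^ 2) ≤ U * ((1 + m ^ 2 + m ^ 4) * (b - a)
      - (1 + 2 * m ^ 2) * (b ^ 3 - a ^ 3) / 3 + (b ^ 5 - a ^ 5) / 5) := by
  have hpoly : ∫ u in a..b, (1 + (m ^ 2 - u ^ 2) + (m ^ 2 - u ^ 2) ^ 2) = (1 + m ^ 2 + m ^ 4)
      * (b - a) - (1 + 2 * m ^ 2) * (b ^ 3 - a ^ 3) / 3 + (b ^ 5 - a ^ 5) / 5 := by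
    have hexpand : (fun u : ℝ => 1 + (m ^ 2 - u ^ 2) + (m ^ 2 - u ^ 2) ^ 2)
        = fun u => (1 + m ^ 2 + m ^ 4) - (1 + 2 * m ^ 2) * u ^ 2 + u ^ 4 := by
      ext
      ring
    rw [hexpand, integral_add, integral_sub]
    · simp [integral_pow]
      ring
    all_goals exact Continuous.intervalIntegrable (by fun_prop) _ _
  calc ∫ u in a..b, exp (-u ^ 2)
      ≤ ∫ u in a..b, exp (-m ^ 2) * (1 + (m ^ 2 - u ^ 2) + (m ^ 2 - u ^ 2) ^ 2) := by
        refine integral_mono_on hab (continuous_exp_neg_sq.intervalIntegrable _ _)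
          (Continuous.intervalIntegrable (by fun_prop) _ _) fun u hu => ?_
        have ht : |m ^ 2 - u ^ 2| ≤ 1 := abs_le.2
          ⟨by nlinarith [hu.1, hu.2], by nlinarith [hu.1, hu.2]⟩
        rw [exp_neg_sq_eq_mul u m]
        exact mul_le_mul_of_nonneg_left
          (by linarith [(abs_le.1 (abs_exp_sub_one_sub_id_le ht)).2]) (exp_pos _).le
    _ = exp (-m ^ 2) * ∫ u in a..b, (1 + (m ^ 2 - u ^ 2) + (m ^ 2 - u ^ 2) ^ 2) :=
        integral_const_mul _ _
    _ ≤ _ := by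
        rw [hpoly]
        exact mul_le_mul_of_nonneg_right hU hQ

lemma exp_neg_sq_lower_bounds :
    0.463 ≤ exp (-0.8775 ^ 2) ∧ 0.3165 ≤ exp (-1.0725 ^ 2) ∧ 0.2005 ≤ exp (-1.2675 ^ 2) ∧
      0.1177 ≤ exp (-1.4625 ^ 2) ∧ 0.5272 ≤ exp (-0.80 ^ 2) := by
  refine ⟨?_, ?_, ?_, ?_, ?_⟩ <;>
    refine le_trans ?_ (inv_pow_le_exp_neg (k := 3) (n := 8) ?_ ?_ ?_ ?_) <;>
    norm_num [sum_range_succ, Nat.factorial]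

lemma exp_neg_sq_upper_bounds :
    exp (-0.9 ^ 2) ≤ 0.4449 ∧ exp (-1.1 ^ 2) ≤ 0.2982 ∧ exp (-1.3 ^ 2) ≤ 0.1846 ∧
      exp (-1.5 ^ 2) ≤ 0.1054 ∧ exp (-0.78 ^ 2) ≤ 0.5443 := by
  refine ⟨?_, ?_, ?_, ?_, ?_⟩ <;>
    refine (exp_neg_le_inv_sum_range ?_ 12).trans ?_ <;>
    norm_num [sum_range_succ, Nat.factorial]

lemma thresholdFun_078_neg : thresholdFun 0.78 < 0 := by
  obtain ⟨L₁, L₂, L₃, L₄, -⟩ := exp_neg_sq_lower_bounds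
  have U := exp_neg_sq_upper_bounds.2.2.2.2
  have hi (a b : ℝ) : IntervalIntegrable (fun u => exp (-u ^ 2)) MeasureTheory.volume a b :=
    continuous_exp_neg_sq.intervalIntegrable a b
  have p₁ := mul_le_integral_exp_neg_sq (a := 0.78) (b := 0.975) (by norm_num) L₁ (by norm_num)
  have p₂ := mul_le_integral_exp_neg_sq (a := 0.975) (b := 1.17) (by norm_num) L₂ (by norm_num)
  have p₃ := mul_le_integral_exp_neg_sq (a := 1.17) (b := 1.365) (by norm_num) L₃ (by norm_num)
  have p₄ := mul_le_integral_exp_neg_sq (a := 1.365) (b := 1.56) (by norm_num) L₄ (by norm_num)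
  rw [thresholdFun_eq_integral, show 2 * (0.78 : ℝ) = 1.56 by norm_num,
    ← integral_add_adjacent_intervals (hi 0.78 1.365) (hi 1.365 1.56),
    ← integral_add_adjacent_intervals (hi 0.78 1.17) (hi 1.17 1.365),
    ← integral_add_adjacent_intervals (hi 0.78 0.975) (hi 0.975 1.17)]
  linarith

lemma thresholdFun_080_pos : 0 < thresholdFun 0.80 := by
  obtain ⟨U₁, U₂, U₃, U₄, -⟩ := exp_neg_sq_upper_bounds
  have L := exp_neg_sq_lower_bounds.2.2.2.2
  have hi (a b : ℝ) : IntervalIntegrable (fun u => exp (-u ^ 2)) MeasureTheory.volume a b :=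
    continuous_exp_neg_sq.intervalIntegrable a b
  have p₁ := integral_exp_neg_sq_le_mul (a := 0.80) (b := 1) (by norm_num) (by norm_num)
    (by norm_num) (by norm_num) U₁ (by norm_num)
  have p₂ := integral_exp_neg_sq_le_mul (a := 1) (b := 1.2) (by norm_num) (by norm_num)
    (by norm_num) (by norm_num) U₂ (by norm_num)
  have p₃ := integral_exp_neg_sq_le_mul (a := 1.2) (b := 1.4) (by norm_num) (by norm_num)
    (by norm_num) (by norm_num) U₃ (by norm_num)
  have p₄ := integral_exp_neg_sq_le_mul (a := 1.4) (b := 1.6) (by norm_num) (by norm_num)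
    (by norm_num) (by norm_num) U₄ (by norm_num)
  rw [thresholdFun_eq_integral, show 2 * (0.80 : ℝ) = 1.6 by norm_num,
    ← integral_add_adjacent_intervals (hi 0.80 1.4) (hi 1.4 1.6),
    ← integral_add_adjacent_intervals (hi 0.80 1.2) (hi 1.2 1.4),
    ← integral_add_adjacent_intervals (hi 0.80 1) (hi 1 1.2)]
  linarith

lemma thresholdFun_neg {x : ℝ} (hx : 0 < x) (hx' : x ≤ 0.78) : thresholdFun x < 0 := by
  obtain ⟨a, ha, hanti, hmono⟩ := exists_strictAntiOn_strictMonoOn_thresholdFun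
  rcases le_or_gt x a with hxa | hax
  · have h0 : thresholdFun 0 = 0 := by simp [thresholdFun]
    rw [← h0]
    exact hanti ⟨le_rfl, ha.1.le⟩ ⟨hx.le, hxa⟩ hx
  · exact (hmono.monotoneOn ⟨hax.le, by linarith⟩ ⟨by linarith [ha.2], by norm_num⟩
      hx').trans_lt thresholdFun_078_neg

lemma thresholdFun_pos {x : ℝ} (hx : 0.80 ≤ x) : 0 < thresholdFun x := by
  obtain ⟨a, ha, -, hmono⟩ := exists_strictAntiOn_strictMonoOn_thresholdFun
  rcases le_or_gt 1 x with hx1 | hx1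
  · exact thresholdFun_pos_of_one_le hx1
  · exact thresholdFun_080_pos.trans_le
      (hmono.monotoneOn ⟨by linarith [ha.2], by norm_num⟩ ⟨by linarith [ha.2], hx1.le⟩ hx)

/-- g has a unique positive root λ, and λ ∈ (0.78, 0.80) (λ ≈ 0.789004). -/
theorem thresholdFun_unique_root :
    (∃! x : ℝ, 0 < x ∧ thresholdFun x = 0) ∧
    ∀ x : ℝ, 0 < x → thresholdFun x = 0 → 0.78 < x ∧ x < 0.80 := by
  have hroot (x : ℝ) (hx : 0 < x) (hgx : thresholdFun x = 0) : 0.78 < x ∧ x < 0.80 :=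
    ⟨lt_of_not_ge fun h => (thresholdFun_neg hx h).ne hgx,
      lt_of_not_ge fun h => (thresholdFun_pos h).ne' hgx⟩
  obtain ⟨c, hc, hgc⟩ := intermediate_value_Ioo (by norm_num : (0.78 : ℝ) ≤ 0.80)
    continuous_thresholdFun.continuousOn
    ⟨thresholdFun_neg (by norm_num) le_rfl, thresholdFun_pos le_rfl⟩
  obtain ⟨a, ha, -, hmono⟩ := exists_strictAntiOn_strictMonoOn_thresholdFun
  have hsub : Ioo (0.78 : ℝ) 0.80 ⊆ Icc a 1 := fun y hy =>
    ⟨by linarith [ha.2, hy.1], by linarith [hy.2]⟩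
  refine ⟨⟨c, ⟨by linarith [hc.1], hgc⟩, fun y hy => ?_⟩, hroot⟩
  exact hmono.injOn (hsub (hroot y hy.1 hy.2)) (hsub hc) (hy.2.trans hgc.symm)
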